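/- Let d = 1, R(z) = |z|, and for n ∈ ℕ, n ≥ 1, let ℓ_n : [0,2] → ℝ be given by ℓ_n(t) = 0 for t ∈ [0,1], ℓ_n(t) = (n/2)(t−1) for t ∈ (1, 1+1/n), ℓ_n(t) = 0 for t ∈ [1+1/n, 2], and let z_n : [0,2] → ℝ be given by z_n(t) = 0 for t ∈ [0,1], z_n(t) = (n/2)(t−1) for t ∈ (1, 1+1/n), z_n(t) = 1/2 for t ∈ [1+1/n, 2]. Then z_n is Lipschitz, z_n(0) = 0, and z_n is a differential solution of the rate-independent system: for a.e. t ∈ (0,2), 0 ∈ ∂R(ż_n(t)) + z_n(t) − 1 − ℓ_n(t), where ∂R(v) = {v/|v|} if v ≠ 0 and ∂R(0) = [−1,1]. (Section 4.2) -/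

import Mathlib

/-!
For `n ≥ 1`, `zₙ(t) = min(1/2, (n/2)(t - 1)⁺)`, which is Lipschitz with constant `n/2`.
Away from the two kinks `t = 1` and `t = 1 + 1/n` the state `zₙ` is affine, so it is
differentiable there with derivative `z'ₙ`; the kinks form a null set. The inclusion then holds
at every time with the witness `w = 1 + ℓₙ(t) - zₙ(t)`: it equals `1` wherever `zₙ` follows the
load (there `∂R(z'ₙ)` is `[-1, 1]` or `{1}`), and `1/2 ∈ [-1, 1]` once `zₙ` has stopped at `1/2`.
-/

open MeasureTheory Set Filter
open scoped Topology NNReal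

noncomputable section

/-- The convex subdifferential of `R(z) = |z|`. -/
def subAbs (v : ℝ) : Set ℝ := if v = 0 then Icc (-1) 1 else {v / |v|}

/-- The loads (4.32) of the second counterexample. -/
def loadn (n : ℕ) (t : ℝ) : ℝ :=
  if t ≤ 1 then 0 else if t < 1 + 1 / (n : ℝ) then ((n : ℝ) / 2) * (t - 1) else 0

/-- The states (4.35). -/
def zn (n : ℕ) (t : ℝ) : ℝ :=
  if t ≤ 1 then 0 else if t < 1 + 1 / (n : ℝ) then ((n : ℝ) / 2) * (t - 1) else 1 / 2

/-- The a.e. derivative of `zₙ`. -/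
def z'n (n : ℕ) (t : ℝ) : ℝ :=
  if t ≤ 1 then 0 else if t < 1 + 1 / (n : ℝ) then (n : ℝ) / 2 else 0

lemma one_mem_subAbs_of_nonneg {v : ℝ} (hv : 0 ≤ v) : (1 : ℝ) ∈ subAbs v := by
  rcases hv.eq_or_lt with rfl | hv
  · simp [subAbs]
  · simp [subAbs, hv.ne', abs_of_pos hv]

lemma one_add_loadn_sub_zn_mem_subAbs (n : ℕ) (t : ℝ) :
    1 + loadn n t - zn n t ∈ subAbs (z'n n t) := by
  unfold loadn zn z'n
  split_ifs
  · simpa using one_mem_subAbs_of_nonneg le_rfl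
  · simpa using one_mem_subAbs_of_nonneg (by positivity : (0 : ℝ) ≤ n / 2)
  · norm_num [subAbs]

lemma zn_eq_min {n : ℕ} (hn : 1 ≤ n) :
    zn n = fun t => min (1 / 2) ((n : ℝ) / 2 * max (t - 1) 0) := by
  have hn : (0 : ℝ) < n := by exact_mod_cast hn
  funext t
  unfold zn
  split_ifs with h₁ h₂
  · simp [max_eq_right (sub_nonpos.2 h₁)]
  · have : t - 1 < 1 / n := by linarith
    rw [max_eq_left (by linarith), min_eq_right]
    nlinarith [(lt_div_iff₀ hn).1 this]
  · have : 1 / n ≤ t - 1 := by linarith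
    rw [max_eq_left (by linarith), min_eq_left]
    nlinarith [(div_le_iff₀ hn).1 this]

lemma lipschitzWith_zn {n : ℕ} (hn : 1 ≤ n) : LipschitzWith ((n : ℝ≥0) / 2) (zn n) := by
  have hramp : LipschitzWith 1 fun t : ℝ => max (t - 1) 0 :=
    (LipschitzWith.of_dist_le_mul fun x y => by simp [Real.dist_eq]).max_const 0
  have hK : ‖(n : ℝ) / 2‖₊ * 1 = (n : ℝ≥0) / 2 := by
    ext; simp
  rw [zn_eq_min hn, ← hK]
  exact ((lipschitzWith_smul ((n : ℝ) / 2)).comp hramp).const_min (1 / 2)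

lemma hasDerivAt_zn {n : ℕ} {t : ℝ} (h₁ : t ≠ 1) (h₂ : t ≠ 1 + 1 / n) :
    HasDerivAt (zn n) (z'n n t) t := by
  rcases h₁.lt_or_gt with h₁ | h₁
  · have hzn : zn n =ᶠ[𝓝 t] fun _ => 0 := by
      filter_upwards [Iio_mem_nhds h₁] with s hs
      rw [zn, if_pos (mem_Iio.1 hs).le]
    rw [z'n, if_pos h₁.le]
    exact (hasDerivAt_const t 0).congr_of_eventuallyEq hzn
  rw [z'n, if_neg (not_le.2 h₁)]
  rcases h₂.lt_or_gt with h₂ | h₂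
  · have hzn : zn n =ᶠ[𝓝 t] fun s => (n : ℝ) / 2 * (s - 1) := by
      filter_upwards [Ioo_mem_nhds h₁ h₂] with s hs
      rw [zn, if_neg (not_le.2 hs.1), if_pos hs.2]
    have hline : HasDerivAt (fun s => (n : ℝ) / 2 * (s - 1)) ((n : ℝ) / 2) t := by
      simpa using ((hasDerivAt_id t).sub_const 1).const_mul ((n : ℝ) / 2)
    rw [if_pos h₂]
    exact hline.congr_of_eventuallyEq hzn
  · have hzn : zn n =ᶠ[𝓝 t] fun _ => 1 / 2 := by
      filter_upwards [Ioi_mem_nhds h₂] with s hs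
      have hs₁ : 1 < s := by
        have : (0 : ℝ) ≤ 1 / n := by positivity
        linarith [mem_Ioi.1 hs]
      rw [zn, if_neg (not_le.2 hs₁), if_neg (not_lt.2 (mem_Ioi.1 hs).le)]
    rw [if_neg (not_lt.2 h₂.le)]
    exact (hasDerivAt_const t _).congr_of_eventuallyEq hzn

/-- **Section 4.2.** `zₙ` is a differential solution of the rate-independent system
`0 ∈ ∂R(żₙ(t)) + zₙ(t) - 1 - ℓₙ(t)` with `zₙ(0) = 0`. -/
theorem second_counterexample_differential_solutions (n : ℕ) (hn : 1 ≤ n) :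
    (∃ L : ℝ≥0, LipschitzOnWith L (zn n) (Icc 0 2)) ∧
    zn n 0 = 0 ∧
    (∀ᵐ t ∂(volume.restrict (Ioo (0 : ℝ) 2)),
      HasDerivAt (zn n) (z'n n t) t ∧
        ∃ w ∈ subAbs (z'n n t), w + (zn n t - 1 - loadn n t) = 0) := by
  refine ⟨⟨_, (lipschitzWith_zn hn).lipschitzOnWith⟩, by simp [zn], ae_restrict_of_ae ?_⟩
  have hkinks : ({1, 1 + 1 / (n : ℝ)} : Set ℝ).Countable := (toFinite _).countable
  filter_upwards [hkinks.ae_notMem volume] with t ht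
  simp only [mem_insert_iff, mem_singleton_iff, not_or] at ht
  exact ⟨hasDerivAt_zn ht.1 ht.2, _, one_add_loadn_sub_zn_mem_subAbs n t, by ring⟩

end
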